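/- Let μ₁ > μ₂, δ := μ₁ − μ₂, σ₁, σ₂ > 0, and let N₀ ≥ 2 and T ≥ 2N₀ be integers. Then for every integer n₁ with N₀ ≤ n₁ ≤ T − N₀, 1 − Φ( δ / √( σ₁²/n₁ + σ₂²/(T−n₁) ) ) ≥ 1 − Φ( δ√T / (σ₁ + σ₂) ). (This is the key pointwise bound behind the result that no variance-driven algorithm with final allocation counts N₁ + N₂ = T, each at least N₀, can have probability of false selection below 1 − Φ(δ√T/(σ₁+σ₂)).) -/

import Mathlib

open MeasureTheory ProbabilityTheory Real

/-- The standard normal cumulative distribution function Φ. -/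
noncomputable def stdNormalCDF (x : ℝ) : ℝ :=
  ((gaussianReal 0 1) (Set.Iic x)).toReal

/-!
The allocation enters only through the variance `σ₁²/n₁ + σ₂²/n₂` of the difference of the
sample means. By Sedrakyan's form of Cauchy–Schwarz this is at least `(σ₁ + σ₂)²/(n₁ + n₂)`,
so the argument of Φ is at most `δ√T/(σ₁ + σ₂)`, and Φ is monotone.
-/

theorem add_sq_div_add_le_sq_div_add_sq_div {R : Type*} [Field R] [LinearOrder R]
    [IsStrictOrderedRing R] {x y a b : R} (ha : 0 < a) (hb : 0 < b) :
    (x + y) ^ 2 / (a + b) ≤ x ^ 2 / a + y ^ 2 / b := by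
  have hpos : ∀ i ∈ Finset.univ, 0 < ![a, b] i := by
    intro i _
    fin_cases i <;> assumption
  simpa [Fin.sum_univ_two] using Finset.sq_sum_div_le_sum_sq_div Finset.univ ![x, y] hpos

theorem div_sqrt_sq_div_add_sq_div_le {x y a b δ : ℝ} (ha : 0 < a) (hb : 0 < b)
    (hxy : 0 < x + y) (hδ : 0 ≤ δ) :
    δ / √(x ^ 2 / a + y ^ 2 / b) ≤ √(a + b) * δ / (x + y) := by
  have hab : 0 < √(a + b) := sqrt_pos.mpr (add_pos ha hb)
  have hsqrt : (x + y) / √(a + b) ≤ √(x ^ 2 / a + y ^ 2 / b) := by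
    rw [← sqrt_sq hxy.le, ← sqrt_div' _ (add_pos ha hb).le]
    exact sqrt_le_sqrt (add_sq_div_add_le_sq_div_add_sq_div ha hb)
  calc δ / √(x ^ 2 / a + y ^ 2 / b) ≤ δ / ((x + y) / √(a + b)) :=
        div_le_div_of_nonneg_left hδ (div_pos hxy hab) hsqrt
    _ = √(a + b) * δ / (x + y) := by field_simp

theorem stdNormalCDF_mono : Monotone stdNormalCDF := fun _ _ h =>
  ENNReal.toReal_mono (measure_ne_top _ _) (measure_mono (Set.Iic_subset_Iic.mpr h))

theorem variance_driven_pointwise_bound_general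
    (μ₁ μ₂ σ₁ σ₂ : ℝ) (hμ : μ₂ < μ₁) (hσ₁ : 0 < σ₁) (hσ₂ : 0 < σ₂)
    (δ : ℝ) (hδ : δ = μ₁ - μ₂)
    (N₀ T : ℕ) (hN₀ : 2 ≤ N₀)
    (n₁ : ℕ) (hn₁ : N₀ ≤ n₁) (hn₂ : n₁ ≤ T - N₀) :
    1 - stdNormalCDF (Real.sqrt (T : ℝ) * δ / (σ₁ + σ₂)) ≤
      1 - stdNormalCDF (δ / Real.sqrt
          (σ₁ ^ 2 / (n₁ : ℝ) + σ₂ ^ 2 / ((T : ℝ) - (n₁ : ℝ)))) := by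
  have hδ_nonneg : 0 ≤ δ := by linarith
  have hn₁_pos : (0 : ℝ) < n₁ := by exact_mod_cast (by omega : 0 < n₁)
  have hn₂_pos : (0 : ℝ) < T - n₁ := sub_pos.mpr (by exact_mod_cast (by omega : n₁ < T))
  have key := div_sqrt_sq_div_add_sq_div_le hn₁_pos hn₂_pos (add_pos hσ₁ hσ₂) hδ_nonneg
  rw [add_sub_cancel] at key
  linarith [stdNormalCDF_mono key]

theorem variance_driven_pointwise_bound
    (μ₁ μ₂ σ₁ σ₂ : ℝ) (hμ : μ₂ < μ₁) (hσ₁ : 0 < σ₁) (hσ₂ : 0 < σ₂)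
    (δ : ℝ) (hδ : δ = μ₁ - μ₂)
    (N₀ T : ℕ) (hN₀ : 2 ≤ N₀) (hT : 2 * N₀ ≤ T)
    (n₁ : ℕ) (hn₁ : N₀ ≤ n₁) (hn₂ : n₁ ≤ T - N₀) :
    1 - stdNormalCDF (Real.sqrt (T : ℝ) * δ / (σ₁ + σ₂)) ≤
      1 - stdNormalCDF (δ / Real.sqrt
          (σ₁ ^ 2 / (n₁ : ℝ) + σ₂ ^ 2 / ((T : ℝ) - (n₁ : ℝ)))) :=
  variance_driven_pointwise_bound_general μ₁ μ₂ σ₁ σ₂ hμ hσ₁ hσ₂ δ hδ N₀ T hN₀ n₁ hn₁ hn₂
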